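/- Let F: [0,1] × ℝ² → ℝ be continuous and globally Lipschitz in (y,z) uniformly in x, with Lipschitz constant k, i.e. |F(x,y,z) − F(x,ỹ,z̃)| ≤ k(|y − ỹ| + |z − z̃|) for all x ∈ [0,1] and y, ỹ, z, z̃ ∈ ℝ. If k < ( sup_{x∈[0,1]} ∫₀¹ ( |K(x,y)| + |∂ₓK(x,y)| ) dy )^{−1}, then for every A, B ∈ ℝ the boundary value problem Lu = F(x,u,u'), u(0) = A, u(1) = B has a unique solution u ∈ C¹([0,1]). -/

import Mathlib

/-!
Writing `h = F(·, u, u')`, a solution is a fixed point of the map `h ↦ F(·, u_h, u_h')`, where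
`u_h` solves the linear problem `Lu = h`, `u(0) = A`, `u(1) = B`. Integrating by parts against the
scale function `s(x) = ∫₀ˣ e^{-Σ}` gives
`u_h(x) = A + (B - A) s(x) / s(1) + ∫₀¹ K(x,y) h(y) dy` and
`u_h'(x) = (B - A) s'(x) / s(1) + ∫₀¹ ∂ₓK(x,y) h(y) dy`,
so the map is Lipschitz for the sup norm with constant `k · sup_x ∫₀¹ (|K| + |∂ₓK|) < 1`, and
Banach's fixed point theorem gives existence and uniqueness.
-/

open Set MeasureTheory intervalIntegral

/-- A function `u ∈ C¹([0,1])` is a solution of the boundary value problem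
`Lu = F(x,u,u')`, `u(0) = A`, `u(1) = B` for the second order operator `L` with
generalized drift (with data `σ` and `Σ = Sig`). -/
def IsBVPSolutionF (σ Sig : ℝ → ℝ) (a b A B : ℝ) (F : ℝ → ℝ → ℝ → ℝ) (u : ℝ → ℝ) :
    Prop :=
  u a = A ∧ u b = B ∧
  ∃ (d : ℝ → ℝ) (x₁ : ℝ),
    ContinuousOn d (Set.Icc a b) ∧
    (∀ x ∈ Set.Icc a b, HasDerivWithinAt u (d x) (Set.Icc a b) x) ∧
    ∀ x ∈ Set.Icc a b,
      d x = Real.exp (-(Sig x)) *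
        (2 * (∫ y in a..x, Real.exp (Sig y) * F y (u y) (d y) / (σ y) ^ 2) + x₁)

/-- The kernel `K(x,y)`. -/
noncomputable def Kker (σ Sig : ℝ → ℝ) (x y : ℝ) : ℝ :=
  (if y ≤ x then (2 * Real.exp (Sig y) / (σ y) ^ 2) *
      (∫ z in y..x, Real.exp (-(Sig z))) else 0)
  - 2 * ((∫ r in (0 : ℝ)..x, Real.exp (-(Sig r))) /
        (∫ r in (0 : ℝ)..1, Real.exp (-(Sig r))))
      * (Real.exp (Sig y) / (σ y) ^ 2) * (∫ z in y..1, Real.exp (-(Sig z)))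

/-- The partial derivative `∂ₓK(x,y)` of the kernel `K` in `x`. -/
noncomputable def Kx (σ Sig : ℝ → ℝ) (x y : ℝ) : ℝ :=
  2 * Real.exp (Sig y - Sig x) / (σ y) ^ 2 *
    ((if y ≤ x then 1 else 0)
      - (∫ z in y..(1 : ℝ), Real.exp (-(Sig z))) /
        (∫ z in (0 : ℝ)..1, Real.exp (-(Sig z))))

theorem integral_ite_le {f : ℝ → ℝ} {a b x : ℝ} (hx : x ∈ Icc a b) :
    ∫ y in a..b, (if y ≤ x then f y else 0) = ∫ y in a..x, f y := by
  simpa [indicator_apply] using integral_indicator (f := f) (μ := volume) hx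

theorem IntervalIntegrable.ite_le {f : ℝ → ℝ} {a b : ℝ} (hf : IntervalIntegrable f volume a b)
    (x : ℝ) : IntervalIntegrable (fun y => if y ≤ x then f y else 0) volume a b := by
  have : (fun y => if y ≤ x then f y else 0) = (Iic x).indicator f := by
    ext y; simp [indicator_apply]
  rw [this, intervalIntegrable_iff]
  exact (intervalIntegrable_iff.1 hf).indicator measurableSet_Iic

theorem abs_integral_mul_le {f w : ℝ → ℝ} {a b D : ℝ} (hab : a ≤ b)
    (hf : IntervalIntegrable f volume a b) (hw : ∀ y ∈ Icc a b, |w y| ≤ D) :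
    |∫ y in a..b, f y * w y| ≤ ∫ y in a..b, |f y| * D :=
  norm_integral_le_of_norm_le hab (ae_of_all _ fun y hy => by
      rw [Real.norm_eq_abs, abs_mul]
      exact mul_le_mul_of_nonneg_left (hw y (Ioc_subset_Icc_self hy)) (abs_nonneg _))
    (hf.abs.mul_const D)

theorem bddAbove_range_of_lt_inv_iSup {ι : Type*} {f : ι → ℝ} {k : ℝ} (hk0 : 0 ≤ k)
    (hk : k < (⨆ i, f i)⁻¹) : BddAbove (range f) := by
  by_contra hf
  rw [Real.iSup_of_not_bddAbove hf, inv_zero] at hk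
  linarith

theorem mul_lt_one_of_lt_inv {k S : ℝ} (hk0 : 0 ≤ k) (hk : k < S⁻¹) : k * S < 1 := by
  rcases le_or_gt S 0 with hS | hS
  · exact (mul_nonpos_of_nonneg_of_nonpos hk0 hS).trans_lt one_pos
  · simpa [hS.ne'] using mul_lt_mul_of_pos_right hk hS

namespace DriftBVP

noncomputable def scale (Sig : ℝ → ℝ) (x : ℝ) : ℝ :=
  ∫ t in (0 : ℝ)..x, Real.exp (-Sig t)

/-- Half the integral of `h` over `[0,x]` against the speed measure `2 e^Σ / σ² dy`. -/
noncomputable def speedPrimitive (σ Sig h : ℝ → ℝ) (x : ℝ) : ℝ :=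
  ∫ y in (0 : ℝ)..x, Real.exp (Sig y) * h y / σ y ^ 2

noncomputable def scaleSpeedIntegral (σ Sig h : ℝ → ℝ) : ℝ :=
  ∫ t in (0 : ℝ)..1, Real.exp (-Sig t) * speedPrimitive σ Sig h t

/-- The constant `x₁` for which `linDeriv` integrates to `B - A` over `[0,1]`. -/
noncomputable def linConst (σ Sig : ℝ → ℝ) (A B : ℝ) (h : ℝ → ℝ) : ℝ :=
  (B - A - 2 * scaleSpeedIntegral σ Sig h) / scale Sig 1

noncomputable def linDeriv (σ Sig : ℝ → ℝ) (A B : ℝ) (h : ℝ → ℝ) (x : ℝ) : ℝ :=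
  Real.exp (-Sig x) * (2 * speedPrimitive σ Sig h x + linConst σ Sig A B h)

/-- The solution of the linear problem `Lu = h`, `u(0) = A`, `u(1) = B`. -/
noncomputable def linSol (σ Sig : ℝ → ℝ) (A B : ℝ) (h : ℝ → ℝ) (x : ℝ) : ℝ :=
  A + ∫ t in (0 : ℝ)..x, linDeriv σ Sig A B h t

variable {σ Sig h : ℝ → ℝ} {A B x : ℝ}

theorem continuous_exp_neg (hSig : Continuous Sig) : Continuous fun x => Real.exp (-Sig x) := by
  fun_prop

theorem hasDerivAt_scale (hSig : Continuous Sig) (x : ℝ) :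
    HasDerivAt (scale Sig) (Real.exp (-Sig x)) x :=
  ((continuous_exp_neg hSig).integral_hasStrictDerivAt 0 x).hasDerivAt

theorem continuous_scale (hSig : Continuous Sig) : Continuous (scale Sig) :=
  continuous_iff_continuousAt.2 fun x => (hasDerivAt_scale hSig x).continuousAt

theorem scale_zero (Sig : ℝ → ℝ) : scale Sig 0 = 0 := integral_same

theorem scale_one_pos (hSig : Continuous Sig) : 0 < scale Sig 1 :=
  intervalIntegral_pos_of_pos ((continuous_exp_neg hSig).intervalIntegrable _ _)
    (fun _ => Real.exp_pos _) one_pos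

theorem integral_exp_neg_eq_scale_sub (hSig : Continuous Sig) (a b : ℝ) :
    ∫ z in a..b, Real.exp (-Sig z) = scale Sig b - scale Sig a :=
  (integral_interval_sub_left ((continuous_exp_neg hSig).intervalIntegrable _ _)
    ((continuous_exp_neg hSig).intervalIntegrable _ _)).symm

theorem continuous_speedIntegrand (hσ : Continuous σ) (hSig : Continuous Sig)
    (hσ0 : ∀ y, σ y ≠ 0) (hh : Continuous h) :
    Continuous fun y => Real.exp (Sig y) * h y / σ y ^ 2 :=
  ((Real.continuous_exp.comp hSig).mul hh).div (hσ.pow 2) fun y => pow_ne_zero 2 (hσ0 y)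

theorem hasDerivAt_speedPrimitive (hσ : Continuous σ) (hSig : Continuous Sig)
    (hσ0 : ∀ y, σ y ≠ 0) (hh : Continuous h) (x : ℝ) :
    HasDerivAt (speedPrimitive σ Sig h) (Real.exp (Sig x) * h x / σ x ^ 2) x :=
  ((continuous_speedIntegrand hσ hSig hσ0 hh).integral_hasStrictDerivAt 0 x).hasDerivAt

theorem continuous_speedPrimitive (hσ : Continuous σ) (hSig : Continuous Sig)
    (hσ0 : ∀ y, σ y ≠ 0) (hh : Continuous h) : Continuous (speedPrimitive σ Sig h) :=
  continuous_iff_continuousAt.2 fun x =>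
    (hasDerivAt_speedPrimitive hσ hSig hσ0 hh x).continuousAt

theorem speedPrimitive_congr {g : ℝ → ℝ} (hhg : EqOn h g (Icc 0 1)) (hx : x ∈ Icc (0 : ℝ) 1) :
    speedPrimitive σ Sig h x = speedPrimitive σ Sig g x :=
  integral_congr fun y hy => by
    rw [uIcc_of_le hx.1] at hy
    simp only [hhg ⟨hy.1, hy.2.trans hx.2⟩]

theorem integral_scale_sub_mul (hσ : Continuous σ) (hSig : Continuous Sig)
    (hσ0 : ∀ y, σ y ≠ 0) (hh : Continuous h) (x : ℝ) :
    ∫ y in (0 : ℝ)..x, (scale Sig x - scale Sig y) * (Real.exp (Sig y) * h y / σ y ^ 2)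
      = ∫ t in (0 : ℝ)..x, Real.exp (-Sig t) * speedPrimitive σ Sig h t := by
  have hp := continuous_speedIntegrand hσ hSig hσ0 hh
  have parts := integral_mul_deriv_eq_deriv_mul (fun t _ => hasDerivAt_scale hSig t)
    (fun t _ => hasDerivAt_speedPrimitive hσ hSig hσ0 hh t)
    ((continuous_exp_neg hSig).intervalIntegrable 0 x) (hp.intervalIntegrable 0 x)
  simp only [sub_mul]
  rw [integral_sub ((continuous_const.fun_mul hp).intervalIntegrable _ _)
    (((continuous_scale hSig).fun_mul hp).intervalIntegrable _ _),
    intervalIntegral.integral_const_mul, parts, scale_zero]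
  simp only [speedPrimitive]
  ring

theorem integral_exp_neg_mul_two_mul_add (hσ : Continuous σ) (hSig : Continuous Sig)
    (hσ0 : ∀ y, σ y ≠ 0) (hh : Continuous h) (c x : ℝ) :
    ∫ t in (0 : ℝ)..x, Real.exp (-Sig t) * (2 * speedPrimitive σ Sig h t + c)
      = 2 * (∫ t in (0 : ℝ)..x, Real.exp (-Sig t) * speedPrimitive σ Sig h t)
        + c * scale Sig x := by
  have he := continuous_exp_neg hSig
  simp only [mul_add, mul_left_comm _ (2 : ℝ), mul_comm _ c]
  rw [integral_add ((continuous_const.fun_mul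
    (he.fun_mul (continuous_speedPrimitive hσ hSig hσ0 hh))).intervalIntegrable _ _)
    ((continuous_const.fun_mul he).intervalIntegrable _ _),
    intervalIntegral.integral_const_mul, intervalIntegral.integral_const_mul, scale]

theorem Kx_mul_eq (hSig : Continuous Sig) (x y : ℝ) :
    Kx σ Sig x y * h y = 2 * Real.exp (-Sig x) *
      ((if y ≤ x then Real.exp (Sig y) * h y / σ y ^ 2 else 0)
        - (scale Sig 1 - scale Sig y) * (Real.exp (Sig y) * h y / σ y ^ 2) / scale Sig 1) := by
  rw [Kx, integral_exp_neg_eq_scale_sub hSig, integral_exp_neg_eq_scale_sub hSig, scale_zero,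
    sub_zero, Real.exp_sub, Real.exp_neg]
  split_ifs <;> ring

theorem Kker_mul_eq (hSig : Continuous Sig) (x y : ℝ) :
    Kker σ Sig x y * h y = 2 *
      ((if y ≤ x then (scale Sig x - scale Sig y) * (Real.exp (Sig y) * h y / σ y ^ 2) else 0)
        - scale Sig x * ((scale Sig 1 - scale Sig y) * (Real.exp (Sig y) * h y / σ y ^ 2))
          / scale Sig 1) := by
  rw [Kker, integral_exp_neg_eq_scale_sub hSig, integral_exp_neg_eq_scale_sub hSig,
    integral_exp_neg_eq_scale_sub hSig, integral_exp_neg_eq_scale_sub hSig, scale_zero, sub_zero]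
  split_ifs <;> ring

theorem integral_Kx_mul (hσ : Continuous σ) (hSig : Continuous Sig) (hσ0 : ∀ y, σ y ≠ 0)
    (hh : Continuous h) (hx : x ∈ Icc (0 : ℝ) 1) :
    ∫ y in (0 : ℝ)..1, Kx σ Sig x y * h y = 2 * Real.exp (-Sig x) *
      (speedPrimitive σ Sig h x - scaleSpeedIntegral σ Sig h / scale Sig 1) := by
  have hp := continuous_speedIntegrand hσ hSig hσ0 hh
  simp_rw [Kx_mul_eq hSig]
  rw [intervalIntegral.integral_const_mul, integral_sub ((hp.intervalIntegrable 0 1).ite_le x) ?_,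
    integral_ite_le hx, intervalIntegral.integral_div, integral_scale_sub_mul hσ hSig hσ0 hh 1]
  · rfl
  · exact (((continuous_const.sub (continuous_scale hSig)).mul hp).div_const _
      ).intervalIntegrable _ _

theorem integral_Kker_mul (hσ : Continuous σ) (hSig : Continuous Sig) (hσ0 : ∀ y, σ y ≠ 0)
    (hh : Continuous h) (hx : x ∈ Icc (0 : ℝ) 1) :
    ∫ y in (0 : ℝ)..1, Kker σ Sig x y * h y =
      2 * ((∫ t in (0 : ℝ)..x, Real.exp (-Sig t) * speedPrimitive σ Sig h t)
        - scale Sig x * scaleSpeedIntegral σ Sig h / scale Sig 1) := by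
  have hp := continuous_speedIntegrand hσ hSig hσ0 hh
  have hs := continuous_scale hSig
  simp_rw [Kker_mul_eq hSig]
  rw [intervalIntegral.integral_const_mul, intervalIntegral.integral_sub ?_ ?_,
    integral_ite_le hx,
    intervalIntegral.integral_div, intervalIntegral.integral_const_mul,
    integral_scale_sub_mul hσ hSig hσ0 hh, integral_scale_sub_mul hσ hSig hσ0 hh 1]
  · rfl
  · exact (((continuous_const.sub hs).mul hp).intervalIntegrable 0 1).ite_le x
  · exact ((continuous_const.mul ((continuous_const.sub hs).mul hp)).div_const _
      ).intervalIntegrable _ _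

theorem intervalIntegrable_Kx (hσ : Continuous σ) (hSig : Continuous Sig) (hσ0 : ∀ y, σ y ≠ 0)
    (x a b : ℝ) : IntervalIntegrable (Kx σ Sig x) volume a b := by
  have hp := continuous_speedIntegrand hσ hSig hσ0 (h := fun _ => 1) continuous_const
  have hK : Kx σ Sig x = _ := funext fun y => (mul_one (Kx σ Sig x y)).symm.trans
    (Kx_mul_eq (h := fun _ => 1) hSig x y)
  rw [hK]
  exact (((hp.intervalIntegrable a b).ite_le x).sub
    ((((continuous_const.sub (continuous_scale hSig)).mul hp).div_const _).intervalIntegrable _ _)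
    ).const_mul _

theorem intervalIntegrable_Kker (hσ : Continuous σ) (hSig : Continuous Sig)
    (hσ0 : ∀ y, σ y ≠ 0) (x a b : ℝ) : IntervalIntegrable (Kker σ Sig x) volume a b := by
  have hp := continuous_speedIntegrand hσ hSig hσ0 (h := fun _ => 1) continuous_const
  have hs := continuous_scale hSig
  have hK : Kker σ Sig x = _ := funext fun y => (mul_one (Kker σ Sig x y)).symm.trans
    (Kker_mul_eq (h := fun _ => 1) hSig x y)
  rw [hK]
  exact (((((continuous_const.sub hs).fun_mul hp).intervalIntegrable a b).ite_le x).sub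
    (((continuous_const.mul ((continuous_const.sub hs).mul hp)).div_const _).intervalIntegrable _ _)
    ).const_mul _

theorem continuous_linDeriv (hσ : Continuous σ) (hSig : Continuous Sig) (hσ0 : ∀ y, σ y ≠ 0)
    (hh : Continuous h) : Continuous (linDeriv σ Sig A B h) :=
  (continuous_exp_neg hSig).mul
    ((continuous_const.mul (continuous_speedPrimitive hσ hSig hσ0 hh)).add continuous_const)

theorem hasDerivAt_linSol (hσ : Continuous σ) (hSig : Continuous Sig) (hσ0 : ∀ y, σ y ≠ 0)
    (hh : Continuous h) (x : ℝ) :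
    HasDerivAt (linSol σ Sig A B h) (linDeriv σ Sig A B h x) x :=
  (((continuous_linDeriv hσ hSig hσ0 hh).integral_hasStrictDerivAt 0 x).hasDerivAt).const_add A

theorem continuous_linSol (hσ : Continuous σ) (hSig : Continuous Sig) (hσ0 : ∀ y, σ y ≠ 0)
    (hh : Continuous h) : Continuous (linSol σ Sig A B h) :=
  continuous_iff_continuousAt.2 fun x => (hasDerivAt_linSol hσ hSig hσ0 hh x).continuousAt

theorem linSol_zero : linSol σ Sig A B h 0 = A := by
  simp [linSol]

theorem linSol_one (hσ : Continuous σ) (hSig : Continuous Sig) (hσ0 : ∀ y, σ y ≠ 0)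
    (hh : Continuous h) : linSol σ Sig A B h 1 = B := by
  have hs := (scale_one_pos hSig).ne'
  simp only [linSol, linDeriv]
  rw [integral_exp_neg_mul_two_mul_add hσ hSig hσ0 hh, linConst]
  field_simp
  rw [scaleSpeedIntegral]
  ring

theorem linDeriv_eq (hσ : Continuous σ) (hSig : Continuous Sig) (hσ0 : ∀ y, σ y ≠ 0)
    (hh : Continuous h) (hx : x ∈ Icc (0 : ℝ) 1) :
    linDeriv σ Sig A B h x =
      (B - A) / scale Sig 1 * Real.exp (-Sig x) + ∫ y in (0 : ℝ)..1, Kx σ Sig x y * h y := by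
  rw [integral_Kx_mul hσ hSig hσ0 hh hx, linDeriv, linConst]
  ring

theorem linSol_eq (hσ : Continuous σ) (hSig : Continuous Sig) (hσ0 : ∀ y, σ y ≠ 0)
    (hh : Continuous h) (hx : x ∈ Icc (0 : ℝ) 1) :
    linSol σ Sig A B h x =
      A + (B - A) / scale Sig 1 * scale Sig x + ∫ y in (0 : ℝ)..1, Kker σ Sig x y * h y := by
  simp only [linSol, linDeriv]
  rw [integral_Kker_mul hσ hSig hσ0 hh hx, integral_exp_neg_mul_two_mul_add hσ hSig hσ0 hh,
    linConst]
  ring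

theorem linSol_sub_linSol (hσ : Continuous σ) (hSig : Continuous Sig) (hσ0 : ∀ y, σ y ≠ 0)
    {h₁ h₂ : ℝ → ℝ} (hh₁ : Continuous h₁) (hh₂ : Continuous h₂) (hx : x ∈ Icc (0 : ℝ) 1) :
    linSol σ Sig A B h₁ x - linSol σ Sig A B h₂ x
      = ∫ y in (0 : ℝ)..1, Kker σ Sig x y * (h₁ y - h₂ y) := by
  have hK := intervalIntegrable_Kker hσ hSig hσ0 x 0 1
  simp_rw [mul_sub]
  rw [linSol_eq hσ hSig hσ0 hh₁ hx, linSol_eq hσ hSig hσ0 hh₂ hx,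
    intervalIntegral.integral_sub (hK.mul_continuousOn hh₁.continuousOn)
      (hK.mul_continuousOn hh₂.continuousOn)]
  ring

theorem linDeriv_sub_linDeriv (hσ : Continuous σ) (hSig : Continuous Sig) (hσ0 : ∀ y, σ y ≠ 0)
    {h₁ h₂ : ℝ → ℝ} (hh₁ : Continuous h₁) (hh₂ : Continuous h₂) (hx : x ∈ Icc (0 : ℝ) 1) :
    linDeriv σ Sig A B h₁ x - linDeriv σ Sig A B h₂ x
      = ∫ y in (0 : ℝ)..1, Kx σ Sig x y * (h₁ y - h₂ y) := by
  have hK := intervalIntegrable_Kx hσ hSig hσ0 x 0 1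
  simp_rw [mul_sub]
  rw [linDeriv_eq hσ hSig hσ0 hh₁ hx, linDeriv_eq hσ hSig hσ0 hh₂ hx,
    intervalIntegral.integral_sub (hK.mul_continuousOn hh₁.continuousOn)
      (hK.mul_continuousOn hh₂.continuousOn)]
  ring

theorem abs_linSol_sub_add_abs_linDeriv_sub_le (hσ : Continuous σ) (hSig : Continuous Sig)
    (hσ0 : ∀ y, σ y ≠ 0) {h₁ h₂ : ℝ → ℝ} (hh₁ : Continuous h₁) (hh₂ : Continuous h₂) {D : ℝ}
    (hD : ∀ y ∈ Icc (0 : ℝ) 1, |h₁ y - h₂ y| ≤ D) (hx : x ∈ Icc (0 : ℝ) 1) :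
    |linSol σ Sig A B h₁ x - linSol σ Sig A B h₂ x|
        + |linDeriv σ Sig A B h₁ x - linDeriv σ Sig A B h₂ x|
      ≤ (∫ y in (0 : ℝ)..1, (|Kker σ Sig x y| + |Kx σ Sig x y|)) * D := by
  have hK := intervalIntegrable_Kker hσ hSig hσ0 x 0 1
  have hKx := intervalIntegrable_Kx hσ hSig hσ0 x 0 1
  rw [linSol_sub_linSol hσ hSig hσ0 hh₁ hh₂ hx, linDeriv_sub_linDeriv hσ hSig hσ0 hh₁ hh₂ hx,
    intervalIntegral.integral_add hK.abs hKx.abs, add_mul,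
    ← intervalIntegral.integral_mul_const, ← intervalIntegral.integral_mul_const]
  exact add_le_add (abs_integral_mul_le zero_le_one hK hD)
    (abs_integral_mul_le zero_le_one hKx hD)

theorem eqOn_linSol_of_hasDerivWithinAt (hσ : Continuous σ) (hSig : Continuous Sig)
    (hσ0 : ∀ y, σ y ≠ 0) (hh : Continuous h) {v d : ℝ → ℝ} {c : ℝ} (hv0 : v 0 = A)
    (hv1 : v 1 = B) (hd : ContinuousOn d (Icc 0 1))
    (hvd : ∀ x ∈ Icc (0 : ℝ) 1, HasDerivWithinAt v (d x) (Icc 0 1) x)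
    (hdx : ∀ x ∈ Icc (0 : ℝ) 1, d x = Real.exp (-Sig x) * (2 * speedPrimitive σ Sig h x + c)) :
    EqOn v (linSol σ Sig A B h) (Icc 0 1) ∧ EqOn d (linDeriv σ Sig A B h) (Icc 0 1) := by
  have hint : ∫ t in (0 : ℝ)..1, d t = B - A := by
    rw [← hv1, ← hv0]
    exact integral_eq_sub_of_hasDeriv_right_of_le zero_le_one
      (fun x hx => (hvd x hx).continuousWithinAt)
      (fun x hx => ((hvd x (Ioo_subset_Icc_self hx)).hasDerivAt
        (Icc_mem_nhds hx.1 hx.2)).hasDerivWithinAt)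
      (hd.intervalIntegrable_of_Icc zero_le_one)
  have hc : c = linConst σ Sig A B h := by
    rw [integral_congr fun t ht => hdx t (by rwa [uIcc_of_le zero_le_one] at ht),
      integral_exp_neg_mul_two_mul_add hσ hSig hσ0 hh] at hint
    rw [linConst, ← hint, scaleSpeedIntegral]
    field_simp [(scale_one_pos hSig).ne']
    ring
  have hdu : EqOn d (linDeriv σ Sig A B h) (Icc 0 1) := fun x hx => by
    rw [hdx x hx, hc, linDeriv]
  refine ⟨fun x hx => eq_of_has_deriv_right_eq (f' := d) (fun y hy => ?_) (fun y hy => ?_)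
    (fun y hy => (hvd y hy).continuousWithinAt) (continuous_linSol hσ hSig hσ0 hh).continuousOn
    (by rw [hv0, linSol_zero]) x hx, hdu⟩
  · exact (hvd y (Ico_subset_Icc_self hy)).mono_of_mem_nhdsWithin (Icc_mem_nhdsGE_of_mem hy)
  · rw [hdu (Ico_subset_Icc_self hy)]
    exact (hasDerivAt_linSol hσ hSig hσ0 hh y).hasDerivWithinAt

noncomputable def nemytskii (F : ℝ → ℝ → ℝ → ℝ)
    (hF : ContinuousOn (fun p : ℝ × ℝ × ℝ => F p.1 p.2.1 p.2.2) {p | p.1 ∈ Icc (0 : ℝ) 1})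
    (u d : ℝ → ℝ) (hu : ContinuousOn u (Icc 0 1)) (hd : ContinuousOn d (Icc 0 1)) :
    C(Icc (0 : ℝ) 1, ℝ) where
  toFun t := F t (u t) (d t)
  continuous_toFun :=
    (hF.comp (continuousOn_id.prodMk (hu.prodMk hd)) fun _ ht => ht).domRestrict

variable {F : ℝ → ℝ → ℝ → ℝ}
  (hF : ContinuousOn (fun p : ℝ × ℝ × ℝ => F p.1 p.2.1 p.2.2) {p | p.1 ∈ Icc (0 : ℝ) 1})

noncomputable def picardMap (hσ : Continuous σ) (hSig : Continuous Sig) (hσ0 : ∀ y, σ y ≠ 0)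
    (A B : ℝ) (ψ : C(Icc (0 : ℝ) 1, ℝ)) : C(Icc (0 : ℝ) 1, ℝ) :=
  have hψ : Continuous (IccExtend zero_le_one ψ) := continuous_IccExtend_iff.2 ψ.continuous
  nemytskii F hF (linSol σ Sig A B (IccExtend zero_le_one ψ))
    (linDeriv σ Sig A B (IccExtend zero_le_one ψ))
    (continuous_linSol hσ hSig hσ0 hψ).continuousOn
    (continuous_linDeriv hσ hSig hσ0 hψ).continuousOn

theorem dist_picardMap_le (hσ : Continuous σ) (hSig : Continuous Sig) (hσ0 : ∀ y, σ y ≠ 0)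
    {k S : ℝ} (hLip : ∀ x ∈ Icc (0 : ℝ) 1, ∀ y z y' z' : ℝ,
      |F x y z - F x y' z'| ≤ k * (|y - y'| + |z - z'|)) (hk0 : 0 ≤ k)
    (hS : ∀ x : Icc (0 : ℝ) 1, ∫ y in (0 : ℝ)..1, (|Kker σ Sig x y| + |Kx σ Sig x y|) ≤ S)
    (ψ₁ ψ₂ : C(Icc (0 : ℝ) 1, ℝ)) :
    dist (picardMap hF hσ hSig hσ0 A B ψ₁) (picardMap hF hσ hSig hσ0 A B ψ₂)
      ≤ k * S * dist ψ₁ ψ₂ := by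
  rw [ContinuousMap.dist_le_iff_of_nonempty]
  intro t
  have hD : ∀ y ∈ Icc (0 : ℝ) 1,
      |IccExtend zero_le_one ψ₁ y - IccExtend zero_le_one ψ₂ y| ≤ dist ψ₁ ψ₂ := fun y hy => by
    simpa only [IccExtend_of_mem _ _ hy, Real.dist_eq] using
      ContinuousMap.dist_apply_le_dist (f := ψ₁) (g := ψ₂) ⟨y, hy⟩
  calc dist (picardMap hF hσ hSig hσ0 A B ψ₁ t) (picardMap hF hσ hSig hσ0 A B ψ₂ t)
      ≤ k * (|linSol σ Sig A B (IccExtend zero_le_one ψ₁) t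
              - linSol σ Sig A B (IccExtend zero_le_one ψ₂) t|
            + |linDeriv σ Sig A B (IccExtend zero_le_one ψ₁) t
              - linDeriv σ Sig A B (IccExtend zero_le_one ψ₂) t|) :=
        (Real.dist_eq _ _).trans_le (hLip t t.2 _ _ _ _)
    _ ≤ k * ((∫ y in (0 : ℝ)..1, (|Kker σ Sig t y| + |Kx σ Sig t y|)) * dist ψ₁ ψ₂) := by
        gcongr
        exact abs_linSol_sub_add_abs_linDeriv_sub_le hσ hSig hσ0
          (continuous_IccExtend_iff.2 ψ₁.continuous) (continuous_IccExtend_iff.2 ψ₂.continuous)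
          hD t.2
    _ ≤ k * (S * dist ψ₁ ψ₂) := by gcongr; exact hS t
    _ = k * S * dist ψ₁ ψ₂ := by ring

theorem isBVPSolutionF_of_isFixedPt (hσ : Continuous σ) (hSig : Continuous Sig)
    (hσ0 : ∀ y, σ y ≠ 0) {ψ : C(Icc (0 : ℝ) 1, ℝ)}
    (hψ : Function.IsFixedPt (picardMap hF hσ hSig hσ0 A B) ψ) :
    IsBVPSolutionF σ Sig 0 1 A B F (linSol σ Sig A B (IccExtend zero_le_one ψ)) := by
  set h := IccExtend zero_le_one ψ
  have hh : Continuous h := continuous_IccExtend_iff.2 ψ.continuous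
  have hfix : EqOn h (fun y => F y (linSol σ Sig A B h y) (linDeriv σ Sig A B h y)) (Icc 0 1) :=
    fun y hy => (IccExtend_of_mem _ _ hy).trans (DFunLike.congr_fun hψ ⟨y, hy⟩).symm
  refine ⟨linSol_zero, linSol_one hσ hSig hσ0 hh, linDeriv σ Sig A B h, linConst σ Sig A B h,
    (continuous_linDeriv hσ hSig hσ0 hh).continuousOn,
    fun x _ => (hasDerivAt_linSol hσ hSig hσ0 hh x).hasDerivWithinAt, fun x hx => ?_⟩
  rw [linDeriv, speedPrimitive_congr hfix hx]
  rfl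

theorem exists_isFixedPt_of_isBVPSolutionF (hσ : Continuous σ) (hSig : Continuous Sig)
    (hσ0 : ∀ y, σ y ≠ 0) {v : ℝ → ℝ} (hv : IsBVPSolutionF σ Sig 0 1 A B F v) :
    ∃ ψ, Function.IsFixedPt (picardMap hF hσ hSig hσ0 A B) ψ ∧
      EqOn v (linSol σ Sig A B (IccExtend zero_le_one ψ)) (Icc 0 1) := by
  obtain ⟨hv0, hv1, d, c, hd, hvd, hdx⟩ := hv
  set ψ := nemytskii F hF v d (fun x hx => (hvd x hx).continuousWithinAt) hd
  have hψ : EqOn (IccExtend zero_le_one ψ) (fun y => F y (v y) (d y)) (Icc 0 1) :=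
    fun y hy => IccExtend_of_mem _ _ hy
  obtain ⟨hvu, hdu⟩ := eqOn_linSol_of_hasDerivWithinAt hσ hSig hσ0
    (continuous_IccExtend_iff.2 ψ.continuous) hv0 hv1 hd hvd
    fun x hx => by rw [hdx x hx, speedPrimitive_congr hψ hx]; rfl
  refine ⟨ψ, ContinuousMap.ext fun t => ?_, hvu⟩
  change F t (linSol σ Sig A B _ t) (linDeriv σ Sig A B _ t) = F t (v t) (d t)
  rw [← hvu t.2, ← hdu t.2]

end DriftBVP

open DriftBVP

/-- if `F` is continuous and globally Lipschitz in `(y,z)` uniformly in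
`x ∈ [0,1]` with Lipschitz constant
`k < ( sup_{x∈[0,1]} ∫₀¹ ( |K(x,y)| + |∂ₓK(x,y)| ) dy )⁻¹`, then for every `A, B ∈ ℝ`
the boundary value problem `Lu = F(x,u,u')`, `u(0) = A`, `u(1) = B` has a unique
solution `u ∈ C¹([0,1])`. -/
theorem bvp_exists_unique_solution_small_lipschitz
    (σ Sig : ℝ → ℝ) (hσ : Continuous σ) (hSig : Continuous Sig)
    (hσpos : ∀ x, 0 < σ x)
    (F : ℝ → ℝ → ℝ → ℝ)
    (hF : ContinuousOn (fun p : ℝ × ℝ × ℝ => F p.1 p.2.1 p.2.2)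
      {p : ℝ × ℝ × ℝ | p.1 ∈ Icc (0 : ℝ) 1})
    (k : ℝ)
    (hLip : ∀ x ∈ Icc (0 : ℝ) 1, ∀ y z ytilde ztilde : ℝ,
      |F x y z - F x ytilde ztilde| ≤ k * (|y - ytilde| + |z - ztilde|))
    (hk : k < (⨆ x : Icc (0 : ℝ) 1,
      ∫ y in (0 : ℝ)..1, (|Kker σ Sig x y| + |Kx σ Sig x y|))⁻¹)
    (A B : ℝ) :
    ∃ u : ℝ → ℝ, IsBVPSolutionF σ Sig 0 1 A B F u ∧
      ∀ v : ℝ → ℝ, IsBVPSolutionF σ Sig 0 1 A B F v → EqOn v u (Icc (0 : ℝ) 1) := by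
  have hσ0 : ∀ y, σ y ≠ 0 := fun y => (hσpos y).ne'
  have hk0 : 0 ≤ k := by
    have h := hLip 0 ⟨le_rfl, zero_le_one⟩ 1 0 0 0
    norm_num at h
    exact (abs_nonneg _).trans h
  have hΦ : ContractingWith _ (picardMap hF hσ hSig hσ0 A B) :=
    ⟨Real.toNNReal_lt_one.2 (mul_lt_one_of_lt_inv hk0 hk), LipschitzWith.of_dist_le'
      (dist_picardMap_le hF hσ hSig hσ0 hLip hk0
        (le_ciSup (bddAbove_range_of_lt_inv_iSup hk0 hk)))⟩
  refine ⟨_, isBVPSolutionF_of_isFixedPt hF hσ hSig hσ0 hΦ.fixedPoint_isFixedPt, fun v hv => ?_⟩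
  obtain ⟨ψ, hψ, hvψ⟩ := exists_isFixedPt_of_isBVPSolutionF hF hσ hSig hσ0 hv
  rwa [hΦ.fixedPoint_unique hψ] at hvψ
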